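/- arXiv:1007.4590 — 3 statements merged into one kernel-verified Lean document; each statement's English description precedes it below -/
import Mathlib

section
/- Let φ₁ be a vector-valued modular form of weight λ₁ with respect to a representation ρ₁ of Γ on ℂ^{n₁}, and φ₂ a vector-valued modular form of weight λ₂ with respect to ρ₂ on ℂ^{n₂}, with λ₁, λ₂ ≥ 0. For a nonnegative integer w, the Rankin–Cohen bracket [φ₁, φ₂]_w^{(λ₁,λ₂)}(z) = Σ_{r=0}^{w} (−1)^r C(λ₁+w−1, w−r) C(λ₂+w−1, r) φ₁^{(r)}(z) ⊗ φ₂^{(w−r)}(z) is a vector-valued modular form of weight λ₁+λ₂+2w with respect to the tensor product representation ρ₁ ⊗ ρ₂. -/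
/-!
If `ψ (γ z) = J ^ l * g z` with `J = c z + d`, induction on `r` using `(γ z)' = J⁻²` and `J' = c`
gives `ψ⁽ʳ⁾(γ z) = ∑ⱼ C(r, j) (l + j)(l + j + 1)⋯(l + r - 1) c ^ (r - j) J ^ (l + r + j) g⁽ʲ⁾(z)`.
In the bracket of `ψ₁, ψ₂` at `γ z`, the coefficient of `g₁⁽ʲ⁾ g₂⁽ᵏ⁾` is then a multiple of
`∑ₛ (-1)ˢ C(w - j - k, s)`, which vanishes unless `j + k = w`; the surviving terms are
`J ^ (l₁ + l₂ + 2w)` times the bracket of `g₁, g₂`. Vector-valued forms reduce to this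
componentwise, since the bracket is bilinear and `(M₁ ⊗ M₂)(u ⊗ v) = M₁ u ⊗ M₂ v`.
-/

open Matrix Complex Finset

abbrev SL2R := Matrix.SpecialLinearGroup (Fin 2) ℝ

noncomputable def Jf (γ : SL2R) (z : ℂ) : ℂ := (γ.1 1 0 : ℝ) * z + (γ.1 1 1 : ℝ)

noncomputable def actSL (γ : SL2R) (z : ℂ) : ℂ :=
  ((γ.1 0 0 : ℝ) * z + (γ.1 0 1 : ℝ)) / Jf γ z

/-- Generalized binomial coefficient C(a, r) = a(a−1)⋯(a−r+1)/r! for a ∈ ℤ. -/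
noncomputable def gchoose (a : ℤ) (r : ℕ) : ℂ :=
  (∏ i ∈ Finset.range r, ((a : ℂ) - (i : ℂ))) / (r.factorial : ℂ)

/-- Vector-valued modular form of weight k for Γ with respect to a real
representation ρ on ℝ^ι: holomorphy on ℋ and f(γz) = 𝔍(γ,z)^k • ρ(γ) f(z). -/
def IsVVMF {ι : Type} [Fintype ι] (Γ : Subgroup SL2R)
    (ρ : SL2R → Matrix ι ι ℝ) (k : ℤ) (f : ℂ → ι → ℂ) : Prop :=
  DifferentiableOn ℂ f {z : ℂ | 0 < z.im} ∧
    ∀ γ ∈ Γ, ∀ z : ℂ, 0 < z.im →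
      f (actSL γ z) = Jf γ z ^ k • ((ρ γ).map Complex.ofReal *ᵥ f z)

local notation "ℍₒ" => UpperHalfPlane.upperHalfPlaneSet

section Mobius

lemma SL2R.det_eq (γ : SL2R) : γ.1 0 0 * γ.1 1 1 - γ.1 0 1 * γ.1 1 0 = 1 := by
  have h := γ.2
  rwa [Matrix.det_fin_two] at h

lemma Jf_ne_zero (γ : SL2R) {z : ℂ} (hz : z ∈ ℍₒ) : Jf γ z ≠ 0 := by
  intro h
  have him : (γ.1 1 0 : ℝ) * z.im = 0 := by simpa [Jf] using congrArg Complex.im h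
  have hc : γ.1 1 0 = 0 := (mul_eq_zero.1 him).resolve_right hz.ne'
  have hd : γ.1 1 1 = 0 := by simpa [Jf, hc] using congrArg Complex.re h
  simpa [hc, hd] using SL2R.det_eq γ

lemma im_actSL (γ : SL2R) (z : ℂ) : (actSL γ z).im = z.im / Complex.normSq (Jf γ z) := by
  rw [actSL, Complex.div_im, div_sub_div_same]
  congr 1
  simp only [Jf, Complex.add_im, Complex.add_re, Complex.mul_im, Complex.mul_re,
    Complex.ofReal_re, Complex.ofReal_im]
  linear_combination z.im * SL2R.det_eq γ

lemma actSL_mem (γ : SL2R) {z : ℂ} (hz : z ∈ ℍₒ) : actSL γ z ∈ ℍₒ := by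
  show 0 < (actSL γ z).im
  rw [im_actSL]
  exact div_pos hz (Complex.normSq_pos.2 (Jf_ne_zero γ hz))

lemma hasDerivAt_Jf (γ : SL2R) (z : ℂ) : HasDerivAt (Jf γ) ((γ.1 1 0 : ℝ) : ℂ) z := by
  have h := ((hasDerivAt_id z).const_mul ((γ.1 1 0 : ℝ) : ℂ)).add_const ((γ.1 1 1 : ℝ) : ℂ)
  simp only [id, mul_one] at h
  exact h

lemma hasDerivAt_actSL (γ : SL2R) {z : ℂ} (hz : Jf γ z ≠ 0) :
    HasDerivAt (actSL γ) (Jf γ z ^ 2)⁻¹ z := by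
  have hnum : HasDerivAt (fun z : ℂ => ((γ.1 0 0 : ℝ) : ℂ) * z + ((γ.1 0 1 : ℝ) : ℂ))
      ((γ.1 0 0 : ℝ) : ℂ) z := by
    simpa using ((hasDerivAt_id z).const_mul ((γ.1 0 0 : ℝ) : ℂ)).add_const ((γ.1 0 1 : ℝ) : ℂ)
  have hdet := congrArg Complex.ofReal (SL2R.det_eq γ)
  push_cast at hdet
  have hnum' : ((γ.1 0 0 : ℝ) : ℂ) * Jf γ z
      - (((γ.1 0 0 : ℝ) : ℂ) * z + ((γ.1 0 1 : ℝ) : ℂ)) * ((γ.1 1 0 : ℝ) : ℂ) = 1 := by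
    rw [Jf]; linear_combination hdet
  have h := hnum.div (hasDerivAt_Jf γ z) hz
  rw [hnum', one_div] at h
  exact h

end Mobius

section IteratedDeriv

theorem ContinuousLinearMap.iteratedDeriv_comp_left {𝕜 E F : Type*} [NontriviallyNormedField 𝕜]
    [NormedAddCommGroup E] [NormedSpace 𝕜 E] [NormedAddCommGroup F] [NormedSpace 𝕜 F]
    {f : 𝕜 → E} {x : 𝕜} {n : ℕ} (L : E →L[𝕜] F)
    (hf : ContDiffAt 𝕜 n f x) : iteratedDeriv n (L ∘ f) x = L (iteratedDeriv n f x) := by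
  simp only [iteratedDeriv_eq_iteratedFDeriv, L.iteratedFDeriv_comp_left hf le_rfl]
  rfl

variable {E : Type*} [NormedAddCommGroup E] [NormedSpace ℂ E] [CompleteSpace E] {f : ℂ → E}
  {s : Set ℂ}

theorem DifferentiableOn.iteratedDeriv (hf : DifferentiableOn ℂ f s) (hs : IsOpen s) (n : ℕ) :
    DifferentiableOn ℂ (iteratedDeriv n f) s := by
  induction n with
  | zero => simpa using hf
  | succ n ih => rw [iteratedDeriv_succ]; exact ih.deriv hs

theorem DifferentiableOn.hasDerivAt_iteratedDeriv (hf : DifferentiableOn ℂ f s) (hs : IsOpen s)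
    (n : ℕ) {z : ℂ} (hz : z ∈ s) :
    HasDerivAt (_root_.iteratedDeriv n f) (_root_.iteratedDeriv (n + 1) f z) z := by
  rw [iteratedDeriv_succ]
  exact ((hf.iteratedDeriv hs n).differentiableAt (hs.mem_nhds hz)).hasDerivAt

theorem DifferentiableOn.iteratedDeriv_clm_comp {F : Type*} [NormedAddCommGroup F]
    [NormedSpace ℂ F] (hf : DifferentiableOn ℂ f s) (hs : IsOpen s) {z : ℂ} (hz : z ∈ s)
    (L : E →L[ℂ] F) (n : ℕ) :
    _root_.iteratedDeriv n (fun x => L (f x)) z = L (_root_.iteratedDeriv n f z) :=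
  L.iteratedDeriv_comp_left ((hf.contDiffOn hs).contDiffAt (hs.mem_nhds hz))

end IteratedDeriv

section Coefficients

lemma gchoose_add_mul_choose (x : ℤ) (j s : ℕ) :
    gchoose x (j + s) * ((j + s).choose j : ℂ) = gchoose x j * gchoose (x - j) s := by
  have hfac : ((j + s).factorial : ℂ) = ((j + s).choose j : ℂ) * j.factorial * s.factorial := by
    have h := Nat.choose_mul_factorial_mul_factorial (Nat.le_add_right j s)
    rw [Nat.add_sub_cancel_left] at h
    exact_mod_cast h.symm
  have hshift : ∏ i ∈ range s, ((x : ℂ) - (j + i : ℕ)) = ∏ i ∈ range s, (((x - j : ℤ) : ℂ) - i) :=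
    prod_congr rfl fun i _ => by push_cast; ring
  have hc : ((j + s).choose j : ℂ) ≠ 0 :=
    Nat.cast_ne_zero.2 (Nat.choose_pos (Nat.le_add_right j s)).ne'
  unfold gchoose
  rw [prod_range_add, hshift, hfac]
  field_simp

lemma gchoose_add_sub_one (a s : ℕ) :
    gchoose ((a : ℤ) + s - 1) s = (a.ascFactorial s : ℂ) / s.factorial := by
  unfold gchoose
  congr 1
  rw [Nat.ascFactorial_eq_prod_range, Nat.cast_prod, ← prod_range_reflect]
  refine prod_congr rfl fun i hi => ?_
  have h : ((a : ℤ) + s - 1) - ((s - 1 - i : ℕ) : ℤ) = ((a + i : ℕ) : ℤ) := by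
    have := mem_range.1 hi
    omega
  exact_mod_cast h

lemma gchoose_mul_choose_mul_ascFactorial (y j s t : ℕ) {x : ℤ} (hx : x = y + t + s + j - 1) :
    gchoose x (j + s) * ((j + s).choose j : ℂ) * (y.ascFactorial t : ℂ) =
      gchoose x j * (y.ascFactorial (t + s) : ℂ) / s.factorial := by
  rw [gchoose_add_mul_choose, show x - j = ((y + t : ℕ) : ℤ) + s - 1 by push_cast; omega,
    gchoose_add_sub_one, ← Nat.ascFactorial_mul_ascFactorial]
  push_cast
  ring

/-- The coefficient of `c ^ (r - j) * J ^ (l + r + j) * g⁽ʲ⁾(z)` in `ψ⁽ʳ⁾(γ z)` when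
`ψ (γ z) = J ^ l * g z` and `J = c z + d`. -/
def derivCoeff (l r j : ℕ) : ℕ := r.choose j * (l + j).ascFactorial (r - j)

lemma derivCoeff_eq_zero_of_lt {l r j : ℕ} (h : r < j) : derivCoeff l r j = 0 := by
  simp [derivCoeff, Nat.choose_eq_zero_of_lt h]

lemma derivCoeff_self (l r : ℕ) : derivCoeff l r r = 1 := by
  simp [derivCoeff]

lemma derivCoeff_succ_zero (l r : ℕ) : derivCoeff l (r + 1) 0 = derivCoeff l r 0 * (l + r) := by
  simp [derivCoeff, Nat.ascFactorial_succ, mul_comm]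

lemma derivCoeff_succ_succ (l r j : ℕ) :
    derivCoeff l (r + 1) (j + 1) =
      derivCoeff l r (j + 1) * (l + r + (j + 1)) + derivCoeff l r j := by
  rcases lt_trichotomy j r with hjr | rfl | hrj
  · obtain ⟨m, rfl⟩ := Nat.exists_eq_add_of_lt hjr
    have hchoose := Nat.choose_succ_right_eq (j + m + 1) j
    have hasc : (l + j).ascFactorial (m + 1) = (l + j) * (l + j + 1).ascFactorial m := by
      have h := Nat.ascFactorial_mul_ascFactorial (l + j) 1 m
      rw [add_comm 1 m] at h
      rw [← h]
      simp [Nat.ascFactorial_succ]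
    simp only [derivCoeff, show j + m + 1 + 1 - (j + 1) = m + 1 by omega,
      show j + m + 1 - (j + 1) = m by omega, show j + m + 1 - j = m + 1 by omega,
      Nat.choose_succ_succ' (j + m + 1) j, hasc, ← add_assoc, Nat.ascFactorial_succ]
    rw [show j + m + 1 - j = m + 1 by omega] at hchoose
    nlinarith [hchoose]
  · simp [derivCoeff_self, derivCoeff_eq_zero_of_lt (Nat.lt_succ_self j)]
  · simp [derivCoeff_eq_zero_of_lt hrj, derivCoeff_eq_zero_of_lt (Nat.lt_succ_of_lt hrj),
      derivCoeff_eq_zero_of_lt (Nat.succ_lt_succ hrj)]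

end Coefficients

section Transform

lemma sum_derivCoeff_succ (l r : ℕ) (X : ℕ → ℂ) :
    ∑ j ∈ range (r + 2), (derivCoeff l (r + 1) j : ℂ) * X j =
      ∑ j ∈ range (r + 1), (derivCoeff l r j : ℂ) * ((l + r + j : ℕ) : ℂ) * X j +
        ∑ j ∈ range (r + 1), (derivCoeff l r j : ℂ) * X (j + 1) := by
  rw [sum_range_succ' _ (r + 1), sum_range_succ' (fun j => (derivCoeff l r j : ℂ) * _ * X j)]
  simp only [derivCoeff_succ_succ, derivCoeff_succ_zero, add_zero, Nat.cast_add, Nat.cast_mul,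
    add_mul, sum_add_distrib]
  rw [sum_range_succ _ r, derivCoeff_eq_zero_of_lt (Nat.lt_succ_self r), Nat.cast_zero]
  ring

lemma mul_pow_sub_one_mul_sq {R : Type*} [CommSemiring R] (X : R) (m : ℕ) :
    (m : R) * X ^ (m - 1) * X ^ 2 = m * X ^ (m + 1) := by
  cases m with
  | zero => simp
  | succ k => rw [Nat.add_sub_cancel]; ring

/-- The derivative of the formula of `iteratedDeriv_comp_actSL` for `r`, multiplied by `J ^ 2`,
is the formula for `r + 1`. -/
lemma sq_mul_sum_derivCoeff (l r : ℕ) (c J : ℂ) (X : ℕ → ℂ) :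
    J ^ 2 * ∑ j ∈ range (r + 1),
        ((derivCoeff l r j : ℂ) * c ^ (r - j) * (((l + r + j : ℕ) : ℂ) * J ^ (l + r + j - 1) * c)
            * X j + (derivCoeff l r j : ℂ) * c ^ (r - j) * J ^ (l + r + j) * X (j + 1)) =
      ∑ j ∈ range (r + 1 + 1),
        (derivCoeff l (r + 1) j : ℂ) * c ^ (r + 1 - j) * J ^ (l + (r + 1) + j) * X j := by
  have hX := sum_derivCoeff_succ l r fun j => c ^ (r + 1 - j) * J ^ (l + (r + 1) + j) * X j
  simp only [← mul_assoc] at hX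
  rw [hX, mul_sum, ← sum_add_distrib]
  refine sum_congr rfl fun j hj => ?_
  have hjr := Nat.lt_succ_iff.1 (mem_range.1 hj)
  have hpow := mul_pow_sub_one_mul_sq J (l + r + j)
  rw [show r + 1 - j = r - j + 1 by omega, show r + 1 - (j + 1) = r - j by omega,
    show l + (r + 1) + j = l + r + j + 1 by omega,
    show l + (r + 1) + (j + 1) = l + r + j + 2 by omega]
  linear_combination (derivCoeff l r j : ℂ) * c ^ (r - j) * c * X j * hpow

theorem iteratedDeriv_comp_actSL (γ : SL2R) (l : ℕ) {ψ g : ℂ → ℂ}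
    (hψ : DifferentiableOn ℂ ψ ℍₒ) (hg : DifferentiableOn ℂ g ℍₒ)
    (h : ∀ z ∈ ℍₒ, ψ (actSL γ z) = Jf γ z ^ l * g z) (r : ℕ) {z : ℂ} (hz : z ∈ ℍₒ) :
    iteratedDeriv r ψ (actSL γ z) = ∑ j ∈ range (r + 1),
      (derivCoeff l r j : ℂ) * ((γ.1 1 0 : ℝ) : ℂ) ^ (r - j) * Jf γ z ^ (l + r + j) *
        iteratedDeriv j g z := by
  induction r generalizing z with
  | zero => simpa [derivCoeff] using h z hz
  | succ r ih =>
    have hopen := UpperHalfPlane.isOpen_upperHalfPlaneSet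
    have hJ := Jf_ne_zero γ hz
    have hchain : HasDerivAt (fun x => iteratedDeriv r ψ (actSL γ x))
        (iteratedDeriv (r + 1) ψ (actSL γ z) * (Jf γ z ^ 2)⁻¹) z :=
      (hψ.hasDerivAt_iteratedDeriv hopen r (actSL_mem γ hz)).comp z (hasDerivAt_actSL γ hJ)
    have hsum := HasDerivAt.fun_sum (u := range (r + 1)) fun j _ =>
      (((hasDerivAt_Jf γ z).pow (l + r + j)).const_mul
        ((derivCoeff l r j : ℂ) * ((γ.1 1 0 : ℝ) : ℂ) ^ (r - j))).mul
        (hg.hasDerivAt_iteratedDeriv hopen j hz)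
    have hsum' := hsum.congr_of_eventuallyEq <| by
      filter_upwards [hopen.mem_nhds hz] with x hx using ih hx
    have heq := hchain.unique hsum'
    simp only [Pi.pow_apply] at heq
    rw [← sq_mul_sum_derivCoeff, ← heq]
    field_simp

end Transform

section Cancellation

noncomputable def rankinCohenCoeff (l₁ l₂ w r : ℕ) : ℂ :=
  (-1 : ℂ) ^ r * gchoose ((l₁ : ℤ) + w - 1) (w - r) * gchoose ((l₂ : ℤ) + w - 1) r

lemma rankinCohenCoeff_mul_derivCoeff {l₁ l₂ w j k s : ℕ} (hjk : j + k ≤ w)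
    (hs : s ≤ w - j - k) :
    rankinCohenCoeff l₁ l₂ w (j + s) * derivCoeff l₁ (j + s) j * derivCoeff l₂ (w - (j + s)) k =
      (-1 : ℂ) ^ j * gchoose ((l₁ : ℤ) + w - 1) k * gchoose ((l₂ : ℤ) + w - 1) j *
        ((l₁ + j).ascFactorial (w - j - k) * (l₂ + k).ascFactorial (w - j - k) /
          (w - j - k).factorial) * ((-1 : ℂ) ^ s * (w - j - k).choose s) := by
  set n := w - j - k
  have E₁ := gchoose_mul_choose_mul_ascFactorial (l₁ + j) k (n - s) s
    (x := (l₁ : ℤ) + w - 1) (by push_cast; omega)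
  have E₂ := gchoose_mul_choose_mul_ascFactorial (l₂ + k) j s (n - s)
    (x := (l₂ : ℤ) + w - 1) (by push_cast; omega)
  rw [show s + (n - s) = n by omega] at E₁
  rw [show n - s + s = n by omega] at E₂
  have hfac : (n.choose s : ℂ) * s.factorial * (n - s).factorial = n.factorial := by
    exact_mod_cast Nat.choose_mul_factorial_mul_factorial hs
  calc rankinCohenCoeff l₁ l₂ w (j + s) * derivCoeff l₁ (j + s) j * derivCoeff l₂ (w - (j + s)) k
      = (-1 : ℂ) ^ j * (-1 : ℂ) ^ s *
          (gchoose ((l₁ : ℤ) + w - 1) (k + (n - s)) * ((k + (n - s)).choose k : ℂ) *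
            ((l₁ + j).ascFactorial s : ℂ)) *
          (gchoose ((l₂ : ℤ) + w - 1) (j + s) * ((j + s).choose j : ℂ) *
            ((l₂ + k).ascFactorial (n - s) : ℂ)) := by
        rw [rankinCohenCoeff, derivCoeff, derivCoeff, show w - (j + s) = k + (n - s) by omega,
          Nat.add_sub_cancel_left, Nat.add_sub_cancel_left]
        push_cast
        ring
    _ = _ := by
        rw [E₁, E₂, ← hfac]
        have := Nat.factorial_ne_zero s
        have := Nat.factorial_ne_zero (n - s)
        have := (Nat.choose_pos hs).ne'
        field_simp

lemma sum_rankinCohenCoeff_mul_derivCoeff (l₁ l₂ w j k : ℕ) :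
    ∑ r ∈ range (w + 1),
        rankinCohenCoeff l₁ l₂ w r * derivCoeff l₁ r j * derivCoeff l₂ (w - r) k =
      if j + k = w then
        (-1 : ℂ) ^ j * gchoose ((l₁ : ℤ) + w - 1) k * gchoose ((l₂ : ℤ) + w - 1) j
      else 0 := by
  have hvanish : ∀ r, r < j ∨ w - r < k →
      rankinCohenCoeff l₁ l₂ w r * derivCoeff l₁ r j * derivCoeff l₂ (w - r) k = 0 := by
    rintro r (h | h) <;> simp [derivCoeff_eq_zero_of_lt h]
  by_cases hjk : j + k ≤ w
  · have hsub : Ico j (w - k + 1) ⊆ range (w + 1) := fun r hr => by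
      simp only [mem_Ico, mem_range] at hr ⊢; omega
    rw [← sum_subset hsub fun r hr hr' => hvanish r <| by
        simp only [mem_Ico, mem_range] at hr hr'; omega,
      sum_Ico_eq_sum_range, show w - k + 1 - j = w - j - k + 1 by omega,
      sum_congr rfl fun s hs =>
        rankinCohenCoeff_mul_derivCoeff hjk (Nat.lt_succ_iff.1 (mem_range.1 hs)), ← mul_sum]
    have halt := congrArg (Int.cast : ℤ → ℂ) (Int.alternating_sum_range_choose (n := w - j - k))
    push_cast at halt
    rw [halt]
    by_cases hn : w - j - k = 0
    · rw [if_pos hn, if_pos (by omega), hn]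
      simp
    · rw [if_neg hn, if_neg (by omega), mul_zero]
  · rw [if_neg (by omega)]
    exact sum_eq_zero fun r hr => hvanish r (by have := mem_range.1 hr; omega)

/-- The coefficient of `g₁⁽ʲ⁾(z) * g₂⁽ᵏ⁾(z)` in `[ψ₁, ψ₂]_w (γ z)`. -/
lemma sum_rankinCohenCoeff_mul_transform (l₁ l₂ w j k : ℕ) (c J : ℂ) :
    ∑ r ∈ range (w + 1), rankinCohenCoeff l₁ l₂ w r *
        ((derivCoeff l₁ r j : ℂ) * c ^ (r - j) * J ^ (l₁ + r + j)) *
        ((derivCoeff l₂ (w - r) k : ℂ) * c ^ (w - r - k) * J ^ (l₂ + (w - r) + k)) =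
      if j + k = w then rankinCohenCoeff l₁ l₂ w j * J ^ (l₁ + l₂ + 2 * w) else 0 := by
  have hterm : ∀ r ∈ range (w + 1), rankinCohenCoeff l₁ l₂ w r *
        ((derivCoeff l₁ r j : ℂ) * c ^ (r - j) * J ^ (l₁ + r + j)) *
        ((derivCoeff l₂ (w - r) k : ℂ) * c ^ (w - r - k) * J ^ (l₂ + (w - r) + k)) =
      rankinCohenCoeff l₁ l₂ w r * derivCoeff l₁ r j * derivCoeff l₂ (w - r) k *
        (c ^ (w - j - k) * J ^ (l₁ + l₂ + w + j + k)) := by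
    intro r hr
    have hrw := mem_range.1 hr
    by_cases h : j ≤ r ∧ k ≤ w - r
    · obtain ⟨hj, hk⟩ := h
      rw [show w - j - k = (r - j) + (w - r - k) by omega,
        show l₁ + l₂ + w + j + k = (l₁ + r + j) + (l₂ + (w - r) + k) by omega, pow_add, pow_add]
      ring
    · rcases not_and_or.1 h with h | h <;>
        simp [derivCoeff_eq_zero_of_lt (not_le.1 h)]
  rw [sum_congr rfl hterm, ← sum_mul, sum_rankinCohenCoeff_mul_derivCoeff]
  split_ifs with h
  · rw [show w - j - k = 0 by omega, show l₁ + l₂ + w + j + k = l₁ + l₂ + 2 * w by omega,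
      rankinCohenCoeff, show w - j = k by omega]
    ring
  · rw [zero_mul]

end Cancellation

section Bracket

noncomputable def rankinCohen (l₁ l₂ w : ℕ) (f₁ f₂ : ℂ → ℂ) (z : ℂ) : ℂ :=
  ∑ r ∈ range (w + 1),
    rankinCohenCoeff l₁ l₂ w r * (iteratedDeriv r f₁ z * iteratedDeriv (w - r) f₂ z)

theorem rankinCohen_actSL (γ : SL2R) (l₁ l₂ w : ℕ) {ψ₁ ψ₂ g₁ g₂ : ℂ → ℂ}
    (hψ₁ : DifferentiableOn ℂ ψ₁ ℍₒ) (hψ₂ : DifferentiableOn ℂ ψ₂ ℍₒ)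
    (hg₁ : DifferentiableOn ℂ g₁ ℍₒ) (hg₂ : DifferentiableOn ℂ g₂ ℍₒ)
    (h₁ : ∀ z ∈ ℍₒ, ψ₁ (actSL γ z) = Jf γ z ^ l₁ * g₁ z)
    (h₂ : ∀ z ∈ ℍₒ, ψ₂ (actSL γ z) = Jf γ z ^ l₂ * g₂ z) {z : ℂ} (hz : z ∈ ℍₒ) :
    rankinCohen l₁ l₂ w ψ₁ ψ₂ (actSL γ z) =
      Jf γ z ^ (l₁ + l₂ + 2 * w) * rankinCohen l₁ l₂ w g₁ g₂ z := by
  set a : ℕ → ℕ → ℕ → ℂ := fun l r j =>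
    (derivCoeff l r j : ℂ) * ((γ.1 1 0 : ℝ) : ℂ) ^ (r - j) * Jf γ z ^ (l + r + j)
  have hexpand : ∀ (l r : ℕ) {ψ g : ℂ → ℂ}, DifferentiableOn ℂ ψ ℍₒ → DifferentiableOn ℂ g ℍₒ →
      (∀ z ∈ ℍₒ, ψ (actSL γ z) = Jf γ z ^ l * g z) → r ≤ w →
      iteratedDeriv r ψ (actSL γ z) = ∑ j ∈ range (w + 1), a l r j * iteratedDeriv j g z := by
    intro l r ψ g hψ hg h hr
    rw [iteratedDeriv_comp_actSL γ l hψ hg h r hz]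
    refine sum_subset (range_subset_range.2 (by omega)) fun j _ hj => ?_
    simp [derivCoeff_eq_zero_of_lt (not_lt.1 (mt mem_range.2 hj))]
  calc rankinCohen l₁ l₂ w ψ₁ ψ₂ (actSL γ z)
      = ∑ r ∈ range (w + 1), rankinCohenCoeff l₁ l₂ w r *
          ((∑ j ∈ range (w + 1), a l₁ r j * iteratedDeriv j g₁ z) *
            (∑ k ∈ range (w + 1), a l₂ (w - r) k * iteratedDeriv k g₂ z)) :=
        sum_congr rfl fun r hr => by
          have hr := Nat.lt_succ_iff.1 (mem_range.1 hr)
          rw [hexpand l₁ r hψ₁ hg₁ h₁ hr, hexpand l₂ (w - r) hψ₂ hg₂ h₂ (Nat.sub_le w r)]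
    _ = ∑ j ∈ range (w + 1), ∑ k ∈ range (w + 1),
          (∑ r ∈ range (w + 1), rankinCohenCoeff l₁ l₂ w r * a l₁ r j * a l₂ (w - r) k) *
            (iteratedDeriv j g₁ z * iteratedDeriv k g₂ z) := by
        simp_rw [sum_mul_sum, mul_sum, sum_mul]
        rw [sum_comm]
        refine sum_congr rfl fun j _ => ?_
        rw [sum_comm]
        exact sum_congr rfl fun k _ => sum_congr rfl fun r _ => by ring
    _ = ∑ j ∈ range (w + 1), Jf γ z ^ (l₁ + l₂ + 2 * w) *
          (rankinCohenCoeff l₁ l₂ w j * (iteratedDeriv j g₁ z * iteratedDeriv (w - j) g₂ z)) := by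
        refine sum_congr rfl fun j hj => ?_
        have hj := Nat.lt_succ_iff.1 (mem_range.1 hj)
        simp only [a, sum_rankinCohenCoeff_mul_transform, ite_mul, zero_mul]
        rw [sum_eq_single (w - j) (fun k _ hk => if_neg (by omega))
          (fun h => absurd (mem_range.2 (by omega)) h), if_pos (by omega)]
        ring
    _ = Jf γ z ^ (l₁ + l₂ + 2 * w) * rankinCohen l₁ l₂ w g₁ g₂ z := by
        rw [rankinCohen, mul_sum]

end Bracket

section VectorValued

theorem Matrix.kronecker_mulVec_mul {α m n m' n' : Type*} [CommSemiring α] [Fintype n]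
    [Fintype n'] (A : Matrix m n α) (B : Matrix m' n' α) (u : n → α) (v : n' → α) :
    kroneckerMap (· * ·) A B *ᵥ (fun q => u q.1 * v q.2) =
      fun p => (A *ᵥ u) p.1 * (B *ᵥ v) p.2 := by
  ext p
  simp only [mulVec, dotProduct, kroneckerMap_apply, Fintype.sum_prod_type, sum_mul_sum]
  exact sum_congr rfl fun _ _ => sum_congr rfl fun _ _ => by ring

variable {κ ι ι₁ ι₂ : Type} [Fintype ι] [Fintype ι₁] [Fintype ι₂]

lemma differentiableOn_mulVec_apply {φ : ℂ → ι → ℂ} {s : Set ℂ} (hφ : DifferentiableOn ℂ φ s)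
    (M : Matrix κ ι ℂ) (i : κ) : DifferentiableOn ℂ (fun y => (M *ᵥ φ y) i) s :=
  ((ContinuousLinearMap.proj i).comp (Matrix.mulVecLin M).toContinuousLinearMap).differentiable
    |>.comp_differentiableOn hφ

lemma iteratedDeriv_mulVec_apply {φ : ℂ → ι → ℂ} {s : Set ℂ} (hφ : DifferentiableOn ℂ φ s)
    (hs : IsOpen s) {z : ℂ} (hz : z ∈ s) (M : Matrix κ ι ℂ) (i : κ) (n : ℕ) :
    iteratedDeriv n (fun y => (M *ᵥ φ y) i) z = (M *ᵥ iteratedDeriv n φ z) i :=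
  hφ.iteratedDeriv_clm_comp hs hz
    ((ContinuousLinearMap.proj i).comp (Matrix.mulVecLin M).toContinuousLinearMap) n

lemma iteratedDeriv_apply {φ : ℂ → ι → ℂ} {s : Set ℂ} (hφ : DifferentiableOn ℂ φ s)
    (hs : IsOpen s) {z : ℂ} (hz : z ∈ s) (i : ι) (n : ℕ) :
    iteratedDeriv n (fun y => φ y i) z = iteratedDeriv n φ z i :=
  hφ.iteratedDeriv_clm_comp hs hz (ContinuousLinearMap.proj i) n

lemma IsVVMF.apply_actSL {Γ : Subgroup SL2R} {ρ : SL2R → Matrix ι ι ℝ} {k : ℕ} {φ : ℂ → ι → ℂ}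
    (hφ : IsVVMF Γ ρ k φ) {γ : SL2R} (hγ : γ ∈ Γ) (i : ι) :
    ∀ z ∈ ℍₒ, φ (actSL γ z) i = Jf γ z ^ k * ((ρ γ).map Complex.ofReal *ᵥ φ z) i := fun z hz => by
  rw [hφ.2 γ hγ z hz, Pi.smul_apply, smul_eq_mul, zpow_natCast]

/-- `ℂ^{ι₁} ⊗ ℂ^{ι₂}` is modelled as `ℂ^{ι₁ × ι₂}`. -/
noncomputable def rankinCohenVec (l₁ l₂ w : ℕ) (φ₁ : ℂ → ι₁ → ℂ) (φ₂ : ℂ → ι₂ → ℂ) :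
    ℂ → ι₁ × ι₂ → ℂ := fun z p =>
  ∑ r ∈ range (w + 1),
    rankinCohenCoeff l₁ l₂ w r * (iteratedDeriv r φ₁ z p.1 * iteratedDeriv (w - r) φ₂ z p.2)

variable {l₁ l₂ w : ℕ} {φ₁ : ℂ → ι₁ → ℂ} {φ₂ : ℂ → ι₂ → ℂ}

lemma differentiableOn_rankinCohenVec (hφ₁ : DifferentiableOn ℂ φ₁ ℍₒ)
    (hφ₂ : DifferentiableOn ℂ φ₂ ℍₒ) : DifferentiableOn ℂ (rankinCohenVec l₁ l₂ w φ₁ φ₂) ℍₒ := by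
  have hopen := UpperHalfPlane.isOpen_upperHalfPlaneSet
  refine differentiableOn_pi.2 fun p => DifferentiableOn.fun_sum fun r _ => ?_
  exact ((differentiableOn_pi.1 (hφ₁.iteratedDeriv hopen r) p.1).mul
    (differentiableOn_pi.1 (hφ₂.iteratedDeriv hopen (w - r)) p.2)).const_mul _

lemma rankinCohenVec_apply (hφ₁ : DifferentiableOn ℂ φ₁ ℍₒ) (hφ₂ : DifferentiableOn ℂ φ₂ ℍₒ)
    {z : ℂ} (hz : z ∈ ℍₒ) (p : ι₁ × ι₂) :
    rankinCohenVec l₁ l₂ w φ₁ φ₂ z p = rankinCohen l₁ l₂ w (φ₁ · p.1) (φ₂ · p.2) z := by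
  have hopen := UpperHalfPlane.isOpen_upperHalfPlaneSet
  simp only [rankinCohenVec, rankinCohen, iteratedDeriv_apply hφ₁ hopen hz,
    iteratedDeriv_apply hφ₂ hopen hz]

lemma kronecker_mulVec_rankinCohenVec (hφ₁ : DifferentiableOn ℂ φ₁ ℍₒ)
    (hφ₂ : DifferentiableOn ℂ φ₂ ℍₒ) {z : ℂ} (hz : z ∈ ℍₒ) (M₁ : Matrix ι₁ ι₁ ℂ)
    (M₂ : Matrix ι₂ ι₂ ℂ) :
    kroneckerMap (· * ·) M₁ M₂ *ᵥ rankinCohenVec l₁ l₂ w φ₁ φ₂ z = fun p =>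
      rankinCohen l₁ l₂ w (fun y => (M₁ *ᵥ φ₁ y) p.1) (fun y => (M₂ *ᵥ φ₂ y) p.2) z := by
  have hopen := UpperHalfPlane.isOpen_upperHalfPlaneSet
  have hsum : rankinCohenVec l₁ l₂ w φ₁ φ₂ z = ∑ r ∈ range (w + 1), rankinCohenCoeff l₁ l₂ w r •
      fun q : ι₁ × ι₂ => iteratedDeriv r φ₁ z q.1 * iteratedDeriv (w - r) φ₂ z q.2 := by
    ext q
    simp [rankinCohenVec, Finset.sum_apply]
  ext p
  simp only [hsum, mulVec_sum, mulVec_smul, kronecker_mulVec_mul, Finset.sum_apply, Pi.smul_apply,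
    smul_eq_mul, rankinCohen, iteratedDeriv_mulVec_apply hφ₁ hopen hz,
    iteratedDeriv_mulVec_apply hφ₂ hopen hz]

theorem IsVVMF.rankinCohenVec {Γ : Subgroup SL2R} {ρ₁ : SL2R → Matrix ι₁ ι₁ ℝ}
    {ρ₂ : SL2R → Matrix ι₂ ι₂ ℝ} (hφ₁ : IsVVMF Γ ρ₁ l₁ φ₁) (hφ₂ : IsVVMF Γ ρ₂ l₂ φ₂) :
    IsVVMF Γ (fun γ => kroneckerMap (· * ·) (ρ₁ γ) (ρ₂ γ)) ((l₁ : ℤ) + l₂ + 2 * w)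
      (_root_.rankinCohenVec l₁ l₂ w φ₁ φ₂) := by
  refine ⟨differentiableOn_rankinCohenVec hφ₁.1 hφ₂.1, fun γ hγ z hz => ?_⟩
  have hmap : (kroneckerMap (· * ·) (ρ₁ γ) (ρ₂ γ)).map Complex.ofReal =
      kroneckerMap (· * ·) ((ρ₁ γ).map Complex.ofReal) ((ρ₂ γ).map Complex.ofReal) := by
    ext; simp
  rw [hmap, kronecker_mulVec_rankinCohenVec hφ₁.1 hφ₂.1 hz,
    show (l₁ : ℤ) + l₂ + 2 * w = ((l₁ + l₂ + 2 * w : ℕ) : ℤ) by push_cast; ring, zpow_natCast]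
  funext p
  rw [rankinCohenVec_apply hφ₁.1 hφ₂.1 (actSL_mem γ hz), Pi.smul_apply, smul_eq_mul]
  exact rankinCohen_actSL γ l₁ l₂ w (differentiableOn_pi.1 hφ₁.1 p.1)
    (differentiableOn_pi.1 hφ₂.1 p.2) (differentiableOn_mulVec_apply hφ₁.1 _ p.1)
    (differentiableOn_mulVec_apply hφ₂.1 _ p.2) (hφ₁.apply_actSL hγ p.1)
    (hφ₂.apply_actSL hγ p.2) hz

end VectorValued

/-- The Rankin–Cohen bracket of two vector-valued modular forms
φ₁ ∈ M̂_{l₁}(Γ, ρ₁) and φ₂ ∈ M̂_{l₂}(Γ, ρ₂),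
[φ₁,φ₂]_w = Σ_{r=0}^w (−1)^r C(l₁+w−1, w−r) C(l₂+w−1, r) φ₁⁽ʳ⁾ ⊗ φ₂⁽ʷ⁻ʳ⁾,
is a vector-valued modular form of weight l₁+l₂+2w with respect to ρ₁ ⊗ ρ₂. -/
theorem rankin_cohen_vector_valued (n₁ n₂ : ℕ) (Γ : Subgroup SL2R)
    (ρ₁ : SL2R → Matrix (Fin n₁) (Fin n₁) ℝ)
    (ρ₂ : SL2R → Matrix (Fin n₂) (Fin n₂) ℝ)
    (l₁ l₂ w : ℕ) (φ₁ : ℂ → Fin n₁ → ℂ) (φ₂ : ℂ → Fin n₂ → ℂ)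
    (hφ₁ : IsVVMF Γ ρ₁ (l₁ : ℤ) φ₁) (hφ₂ : IsVVMF Γ ρ₂ (l₂ : ℤ) φ₂) :
    IsVVMF Γ (fun γ => Matrix.kroneckerMap (· * ·) (ρ₁ γ) (ρ₂ γ))
      ((l₁ : ℤ) + l₂ + 2 * w)
      (fun z p => ∑ r ∈ Finset.range (w + 1),
        (-1 : ℂ) ^ r * gchoose ((l₁ : ℤ) + w - 1) (w - r) *
          gchoose ((l₂ : ℤ) + w - 1) r *
          (iteratedDeriv r φ₁ z p.1 * iteratedDeriv (w - r) φ₂ z p.2)) :=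
  hφ₁.rankinCohenVec hφ₂
end

section
/- Let ω be a vector-valued modular form of weight k for Γ with respect to ρ_n, written as ω(z) = L_n(z)·(f₀(z), f₁(z), …, f_n(z))ᵗ with f₀,…,f_n holomorphic on ℋ. If r is an integer with 0 ≤ r ≤ n such that f_ℓ ≡ 0 for all ℓ < r, then f_r is a (scalar) modular form of weight k−n+2r for Γ. -/
open Matrix Complex

/-- The vector (z₁, z₂)^n = (z₁ⁿ, z₁ⁿ⁻¹z₂, …, z₂ⁿ) ∈ ℂ^{n+1}. -/
def symVec (n : ℕ) (z₁ z₂ : ℂ) : Fin (n + 1) → ℂ :=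
  fun i => z₁ ^ (n - (i : ℕ)) * z₂ ^ (i : ℕ)

lemma seq_eq_of_poly {n : ℕ} (a b : Fin (n+1) → ℂ)
    (h : ∀ t : ℂ, ∑ j, a j * t ^ (j:ℕ) = ∑ j, b j * t ^ (j:ℕ)) : a = b := by
  have hp : (∑ j : Fin (n+1), Polynomial.monomial (j:ℕ) (a j)) =
      (∑ j : Fin (n+1), Polynomial.monomial (j:ℕ) (b j)) := by
    apply Polynomial.funext
    intro t
    simpa [Polynomial.eval_finset_sum, Polynomial.eval_monomial] using h t
  funext i
  have h2 := congrArg (fun p => Polynomial.coeff p (i:ℕ)) hp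
  simpa [Polynomial.finset_sum_coeff, Polynomial.coeff_monomial, Fin.val_inj] using h2

/-- Let ω(z) = L_n(z)·(f₀(z),…,f_n(z))ᵗ be a vector-valued modular form of
weight k with respect to ρ_n, where L_n(z) = ρ_n([[1,z],[0,1]]).  If f_ℓ ≡ 0
on ℋ for all ℓ < r, then f_r is a scalar modular form of weight k−n+2r. -/
theorem first_nonzero_coefficient_modular (n : ℕ) (k : ℤ) (Γ : Subgroup SL2R)
    (ρ : Matrix (Fin 2) (Fin 2) ℂ → Matrix (Fin (n + 1)) (Fin (n + 1)) ℂ)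
    (hρ : ∀ (g : Matrix (Fin 2) (Fin 2) ℂ) (z₁ z₂ : ℂ),
      ρ g *ᵥ symVec n z₁ z₂ =
        symVec n (g 0 0 * z₁ + g 0 1 * z₂) (g 1 0 * z₁ + g 1 1 * z₂))
    (f : Fin (n + 1) → ℂ → ℂ)
    (hf : ∀ i, DifferentiableOn ℂ (f i) {z : ℂ | 0 < z.im})
    -- ω(z) = L_n(z)·ᵗ(f₀(z),…,f_n(z)) is a vector-valued modular form of weight k:
    (hω : ∀ γ ∈ Γ, ∀ z : ℂ, 0 < z.im →
      ρ !![1, actSL γ z; 0, 1] *ᵥ (fun i => f i (actSL γ z)) =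
        Jf γ z ^ k • (ρ ((γ.1).map Complex.ofReal) *ᵥ
          (ρ !![1, z; 0, 1] *ᵥ fun i => f i z)))
    (r : Fin (n + 1))
    (hvanish : ∀ ℓ : Fin (n + 1), (ℓ : ℕ) < (r : ℕ) → ∀ z : ℂ, 0 < z.im → f ℓ z = 0) :
    ∀ γ ∈ Γ, ∀ z : ℂ, 0 < z.im →
      f r (actSL γ z) = Jf γ z ^ (k - (n : ℤ) + 2 * (r : ℕ)) * f r z := by
  intro γ hγ z hz
  obtain ⟨ar, br, cr, dr, har, hbr, hcr, hdr⟩ :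
      ∃ ar br cr dr : ℝ, γ.1 0 0 = ar ∧ γ.1 0 1 = br ∧ γ.1 1 0 = cr ∧ γ.1 1 1 = dr :=
    ⟨_, _, _, _, rfl, rfl, rfl, rfl⟩
  have hr : (r : ℕ) ≤ n := Nat.lt_succ_iff.mp r.2
  have hJdef : Jf γ z = (cr : ℂ) * z + (dr : ℂ) := by
    simp only [Jf, hcr, hdr]
  set J : ℂ := Jf γ z with hJset
  have hdetR : ar * dr - br * cr = 1 := by
    have h := γ.2
    rw [Matrix.det_fin_two] at h
    rw [har, hbr, hcr, hdr] at h
    linarith [h]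
  have hdet : (ar : ℂ) * dr - (br : ℂ) * cr = 1 := by
    exact_mod_cast congrArg Complex.ofReal hdetR
  have hJ : J ≠ 0 := by
    intro h0
    rw [hJdef] at h0
    have him := congrArg Complex.im h0
    simp at him
    have hc0 : cr = 0 := by
      rcases him with h' | h'
      · exact h'
      · exact absurd h' (ne_of_gt hz)
    have hre := congrArg Complex.re h0
    simp [hc0] at hre
    rw [hc0, hre] at hdetR
    simp at hdetR
  have hA : actSL γ z = ((ar : ℂ) * z + (br : ℂ)) / J := by
    simp only [actSL, har, hbr, hJset]
  have hAJ : actSL γ z * J = (ar : ℂ) * z + (br : ℂ) := by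
    rw [hA, div_mul_cancel₀ _ hJ]
  -- action of ρ on unipotent matrices
  have hU : ∀ (w z₁ z₂ : ℂ), ρ !![1, w; 0, 1] *ᵥ symVec n z₁ z₂ = symVec n (z₁ + w * z₂) z₂ := by
    intro w z₁ z₂
    have := hρ !![1, w; 0, 1] z₁ z₂
    simpa using this
  have hg : ∀ z₁ z₂ : ℂ, ρ ((γ.1).map Complex.ofReal) *ᵥ symVec n z₁ z₂ =
      symVec n ((ar : ℂ) * z₁ + (br : ℂ) * z₂) ((cr : ℂ) * z₁ + (dr : ℂ) * z₂) := by
    intro z₁ z₂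
    have h := hρ ((γ.1).map Complex.ofReal) z₁ z₂
    rw [h]
    congr 1 <;> simp [Matrix.map_apply, har, hbr, hcr, hdr]
  -- inverse identity
  have hinv : ρ !![1, -actSL γ z; 0, 1] * ρ !![1, actSL γ z; 0, 1] = 1 := by
    have hrow : ∀ t : ℂ, (ρ !![1, -actSL γ z; 0, 1] * ρ !![1, actSL γ z; 0, 1]) *ᵥ symVec n 1 t
        = symVec n 1 t := by
      intro t
      rw [← Matrix.mulVec_mulVec, hU, hU]
      congr 1
      ring
    ext i j
    have hi := seq_eq_of_poly ((ρ !![1, -actSL γ z; 0, 1] * ρ !![1, actSL γ z; 0, 1]) i)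
        ((1 : Matrix (Fin (n+1)) (Fin (n+1)) ℂ) i) ?_
    · exact congrFun hi j
    intro t
    have h1 : ∑ j, (ρ !![1, -actSL γ z; 0, 1] * ρ !![1, actSL γ z; 0, 1]) i j * t ^ (j:ℕ)
        = ((ρ !![1, -actSL γ z; 0, 1] * ρ !![1, actSL γ z; 0, 1]) *ᵥ symVec n 1 t) i := by
      simp [Matrix.mulVec, dotProduct, symVec, one_pow]
    rw [h1, hrow]
    simp [Matrix.one_apply, symVec, one_pow]
  -- the matrix N
  set N : Matrix (Fin (n+1)) (Fin (n+1)) ℂ :=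
    ρ !![1, -actSL γ z; 0, 1] * (ρ ((γ.1).map Complex.ofReal) * ρ !![1, z; 0, 1]) with hN
  have hNrow : ∀ t : ℂ, N *ᵥ symVec n 1 t = symVec n J⁻¹ ((cr : ℂ) + J * t) := by
    intro t
    rw [hN, ← Matrix.mulVec_mulVec, ← Matrix.mulVec_mulVec, hU, hg, hU]
    have e2 : (cr : ℂ) * (1 + z * t) + (dr : ℂ) * t = (cr : ℂ) + J * t := by
      rw [hJdef]; ring
    rw [e2]
    have e1 : (ar : ℂ) * (1 + z * t) + (br : ℂ) * t + -actSL γ z * ((cr : ℂ) + J * t) = J⁻¹ := by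
      apply eq_inv_of_mul_eq_one_left
      linear_combination (-((cr : ℂ) + J * t)) * hAJ + hdet + (ar : ℂ) * hJdef
    rw [e1]
  -- entries of the r-th row of N
  set bvec : Fin (n+1) → ℂ := fun j =>
    if (j:ℕ) ≤ (r:ℕ) then
      J⁻¹ ^ (n - (r:ℕ)) * (J ^ (j:ℕ) * ((cr : ℂ) ^ ((r:ℕ) - (j:ℕ)) * (Nat.choose r j : ℂ)))
    else 0 with hbvec
  have hNr : N r = bvec := by
    apply seq_eq_of_poly
    intro t
    have h1 : ∑ j, N r j * t ^ (j:ℕ) = (N *ᵥ symVec n 1 t) r := by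
      simp [Matrix.mulVec, dotProduct, symVec, one_pow]
    rw [h1, hNrow]
    have h2 : symVec n J⁻¹ ((cr : ℂ) + J * t) r
        = J⁻¹ ^ (n - (r:ℕ)) * (J * t + (cr : ℂ)) ^ (r:ℕ) := by
      simp only [symVec]
      rw [add_comm ((cr : ℂ)) (J * t)]
    rw [h2, add_pow]
    have h3 : ∑ j : Fin (n+1), bvec j * t ^ (j:ℕ)
        = ∑ j ∈ Finset.range (n+1),
            (if j ≤ (r:ℕ) then
              J⁻¹ ^ (n - (r:ℕ)) * (J ^ j * ((cr : ℂ) ^ ((r:ℕ) - j) * (Nat.choose r j : ℂ)))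
            else 0) * t ^ j := by
      rw [← Fin.sum_univ_eq_sum_range]
    rw [h3]
    rw [← Finset.sum_subset (Finset.range_subset_range.mpr (by omega) :
        Finset.range ((r:ℕ)+1) ⊆ Finset.range (n+1))]
    · rw [Finset.mul_sum]
      apply Finset.sum_congr rfl
      intro m hm
      rw [Finset.mem_range] at hm
      rw [if_pos (by omega)]
      ring
    · intro x hx hx'
      rw [Finset.mem_range] at hx
      rw [Finset.mem_range] at hx'
      rw [if_neg (by omega), zero_mul]
  -- main equation
  have h1 := hω γ hγ z hz
  have h2 := congrArg (fun v => ρ !![1, -actSL γ z; 0, 1] *ᵥ v) h1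
  simp only [Matrix.mulVec_mulVec, Matrix.mulVec_smul] at h2
  rw [hinv, Matrix.one_mulVec] at h2
  rw [← hN] at h2
  have h3 := congrFun h2 r
  simp only [Pi.smul_apply, smul_eq_mul] at h3
  have h4 : (N *ᵥ fun i => f i z) r = ∑ j, N r j * f j z := by
    simp [Matrix.mulVec, dotProduct]
  rw [h4, hNr] at h3
  have h5 : ∑ j, bvec j * f j z = J⁻¹ ^ (n - (r:ℕ)) * J ^ (r:ℕ) * f r z := by
    rw [Finset.sum_eq_single r]
    · rw [hbvec]
      simp [Nat.choose_self]
    · intro j _ hj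
      rcases lt_trichotomy (j:ℕ) (r:ℕ) with h | h | h
      · rw [hvanish j h z hz, mul_zero]
      · exact absurd (Fin.val_injective h) hj
      · simp only [hbvec]
        rw [if_neg (by omega : ¬((j:ℕ) ≤ (r:ℕ))), zero_mul]
    · intro h; exact absurd (Finset.mem_univ r) h
  rw [h5] at h3
  have hzp : J ^ k * (J⁻¹ ^ (n - (r:ℕ)) * J ^ (r:ℕ)) = J ^ (k - (n:ℤ) + 2 * ((r:ℕ):ℤ)) := by
    rw [inv_pow, ← zpow_natCast J (n - (r:ℕ)), ← zpow_natCast J (r:ℕ), ← _root_.zpow_neg,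
      ← zpow_add₀ hJ, ← zpow_add₀ hJ]
    congr 1
    omega
  rw [h3, ← hzp]
  ring
end

section
/- For g_j a scalar modular form of weight k−n+2j for Γ (0 ≤ j ≤ n), the Rankin–Cohen bracket [g_j, v̂_n]_{n−j}^{(k−n+2j, −n)}(z) equals L_n(z)·(g₀ᴸ(z), …, g_nᴸ(z))ᵗ, where gₗᴸ = 0 for 0 ≤ ℓ ≤ j−1 and gₗᴸ = (n−ℓ)! · α_{n−j, ℓ−j}^{k−n+2j} · D^{ℓ−j}g_j for j ≤ ℓ ≤ n, with α_{w,r}^{λ} = (−1)^r C(λ+w−1, w−r) C(w−n−1, r) and D = d/dz. -/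
open Matrix Complex Finset

/-- α_{w,r}^{λ} = (−1)^r C(λ+w−1, w−r) C(w−n−1, r)  (n fixed). -/
noncomputable def acoef (n : ℕ) (l : ℤ) (w r : ℕ) : ℂ :=
  (-1 : ℂ) ^ r * gchoose (l + w - 1) (w - r) * gchoose ((w : ℤ) - n - 1) r

/-- v̂_n(z) = (zⁿ, …, z, 1). -/
def vhat (n : ℕ) (z : ℂ) : Fin (n + 1) → ℂ := symVec n z 1

/-- Scalar modular form of weight k for Γ. -/
def IsMF (Γ : Subgroup SL2R) (k : ℤ) (f : ℂ → ℂ) : Prop :=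
  DifferentiableOn ℂ f {z : ℂ | 0 < z.im} ∧
    ∀ γ ∈ Γ, ∀ z : ℂ, 0 < z.im → f (actSL γ z) = Jf γ z ^ k * f z

/-! `ρ_n(g)` is determined by its action on the vectors `(w, 1)^n`, which span `ℂ^{n+1}`
(Vandermonde), so `L_n(z)` is the matrix of the substitution `w ↦ w + z`, with binomial entries
`C(n-i, n-l) z^{(n-i)-(n-l)}`. Since `D^m v̂_n` has entries `m! C(n-i, m) z^{n-i-m}`, the
bracket and `L_n(z) (g_ℓᴸ)_ℓ` agree term by term under `ℓ = j + r`. -/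

open scoped ContDiff

theorem iteratedDeriv_pi_apply {𝕜 ι F : Type*} [NontriviallyNormedField 𝕜] [Fintype ι]
    [NormedAddCommGroup F] [NormedSpace 𝕜 F] {f : ι → 𝕜 → F}
    (hf : ∀ i, ContDiff 𝕜 ∞ (f i)) (m : ℕ) :
    iteratedDeriv m (fun x i => f i x) = fun x i => iteratedDeriv m (f i) x := by
  induction m with
  | zero => simp
  | succ m ih =>
    ext x i
    have hdiff (i : ι) : Differentiable 𝕜 (iteratedDeriv m (f i)) :=
      (hf i).differentiable_iteratedDeriv m (by exact_mod_cast WithTop.coe_lt_top _)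
    rw [iteratedDeriv_succ, ih, deriv_pi fun i => (hdiff i).differentiableAt, iteratedDeriv_succ]

theorem symVec_one_apply (n : ℕ) (w : ℂ) (i : Fin (n + 1)) : symVec n w 1 i = w ^ (n - i) := by
  simp [symVec]

theorem iteratedDeriv_vhat_apply (n m : ℕ) (z : ℂ) (i : Fin (n + 1)) :
    iteratedDeriv m (vhat n) z i =
      (m.factorial * (n - i).choose m : ℂ) * z ^ ((n - i) - m) := by
  have hvhat : vhat n = fun z (i : Fin (n + 1)) => z ^ (n - i) := by
    ext z i; exact symVec_one_apply n z i
  rw [hvhat, iteratedDeriv_pi_apply (fun i => contDiff_id.pow _)]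
  beta_reduce
  rw [iteratedDeriv_pow, Nat.descFactorial_eq_factorial_mul_choose]
  push_cast; rfl

/-- `L_n(z) = ρ_n([[1, z], [0, 1]])`, written through the degrees `n - i`, `n - l` of the
monomials that `symVec` places at positions `i`, `l`. -/
noncomputable def translationMatrix (n : ℕ) (z : ℂ) : Matrix (Fin (n + 1)) (Fin (n + 1)) ℂ :=
  Matrix.of fun i l => ((n - i).choose (n - l) : ℂ) * z ^ ((n - i) - (n - l))

theorem translationMatrix_mulVec_symVec (n : ℕ) (z w : ℂ) :
    translationMatrix n z *ᵥ symVec n w 1 = symVec n (w + z) 1 := by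
  ext i
  have hi : n - (i : ℕ) + 1 ≤ n + 1 := by omega
  simp only [mulVec, dotProduct, translationMatrix, of_apply, symVec_one_apply]
  rw [Fin.sum_univ_eq_sum_range
      (fun l => ((n - i).choose (n - l) : ℂ) * z ^ ((n - i) - (n - l)) * w ^ (n - l)),
    ← sum_range_reflect, add_pow]
  calc _ = ∑ m ∈ range (n + 1), w ^ m * z ^ (n - i - m) * ((n - i).choose m : ℂ) :=
        sum_congr rfl fun m hm => by
          rw [show n - (n + 1 - 1 - m) = m by rw [mem_range] at hm; omega]
          ring
    _ = _ := (sum_subset (range_subset_range.2 hi) fun m _ hm => by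
        rw [Nat.choose_eq_zero_of_lt (by simpa using hm)]
        simp).symm

theorem Matrix.ext_of_mulVec_symVec {m : Type*} {n : ℕ} {A B : Matrix m (Fin (n + 1)) ℂ}
    (h : ∀ w : ℂ, A *ᵥ symVec n w 1 = B *ᵥ symVec n w 1) : A = B := by
  rw [← sub_eq_zero]
  ext i l
  -- after reversing the columns, each row of `A - B` is a polynomial vanishing at `0, …, n`
  have hrow : (fun l' : Fin (n + 1) => (A - B) i (Fin.rev l')) = 0 := by
    refine eq_zero_of_forall_index_sum_mul_pow_eq_zero
      (f := fun t : Fin (n + 1) => ((t : ℕ) : ℂ))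
      (fun s t hst => Fin.ext (Nat.cast_injective hst)) fun t => ?_
    have ht := congrFun (h t) i
    rw [← sub_eq_zero, ← Pi.sub_apply, ← sub_mulVec] at ht
    rw [← ht, mulVec, dotProduct, ← Equiv.sum_comp Fin.revPerm]
    refine sum_congr rfl fun l _ => ?_
    simp [symVec_one_apply]
  simpa using congrFun hrow (Fin.rev l)

theorem sum_mul_iteratedDeriv_vhat {n j : ℕ} (hj : j ≤ n) (c : ℕ → ℂ) (z : ℂ) :
    (fun i => ∑ r ∈ range (n - j + 1), c r * iteratedDeriv (n - j - r) (vhat n) z i) =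
      translationMatrix n z *ᵥ fun ℓ : Fin (n + 1) =>
        if (ℓ : ℕ) < j then 0 else ((n - ℓ).factorial : ℂ) * c (ℓ - j) := by
  ext i
  simp only [mulVec, dotProduct, translationMatrix, of_apply, iteratedDeriv_vhat_apply]
  rw [Fin.sum_univ_eq_sum_range (fun l =>
      ((n - i).choose (n - l) : ℂ) * z ^ ((n - i) - (n - l)) *
        if l < j then 0 else ((n - l).factorial : ℂ) * c (l - j)),
    show range (n + 1) = range (j + (n - j + 1)) by congr 1; omega, sum_range_add _ j,
    sum_eq_zero (s := range j) fun l hl => by simp [mem_range.1 hl], zero_add]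
  refine sum_congr rfl fun r _ => ?_
  rw [if_neg (by omega), Nat.add_sub_cancel_left, show n - (j + r) = n - j - r by omega]
  ring

theorem bracket_eq_Ln_mulVec_general (n j : ℕ) (hj : j ≤ n) (k : ℤ)
    (ρ : Matrix (Fin 2) (Fin 2) ℂ → Matrix (Fin (n + 1)) (Fin (n + 1)) ℂ)
    (hρ : ∀ (g : Matrix (Fin 2) (Fin 2) ℂ) (z₁ z₂ : ℂ),
      ρ g *ᵥ symVec n z₁ z₂ =
        symVec n (g 0 0 * z₁ + g 0 1 * z₂) (g 1 0 * z₁ + g 1 1 * z₂))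
    (g : ℂ → ℂ) :
    ∀ z : ℂ, 0 < z.im →
      (fun i => ∑ r ∈ Finset.range (n - j + 1),
          acoef n (k - n + 2 * j) (n - j) r * iteratedDeriv r g z *
            iteratedDeriv (n - j - r) (vhat n) z i) =
        ρ !![1, z; 0, 1] *ᵥ (fun ℓ : Fin (n + 1) =>
          if (ℓ : ℕ) < j then 0
          else ((n - (ℓ : ℕ)).factorial : ℂ) * acoef n (k - n + 2 * j) (n - j) ((ℓ : ℕ) - j) *
            iteratedDeriv ((ℓ : ℕ) - j) g z) := by
  intro z _
  have hL : ρ !![1, z; 0, 1] = translationMatrix n z :=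
    Matrix.ext_of_mulVec_symVec fun w => by
      rw [hρ, translationMatrix_mulVec_symVec]
      simp
  rw [hL]
  exact (sum_mul_iteratedDeriv_vhat hj _ z).trans (by simp only [mul_assoc])

/-- For g a scalar modular form of weight k−n+2j, the Rankin–Cohen bracket
[g, v̂_n]_{n−j}^{(k−n+2j,−n)} equals L_n(z)·ᵗ(g₀ᴸ,…,g_nᴸ), where gᴸ_ℓ = 0 for
ℓ < j and gᴸ_ℓ = (n−ℓ)! α_{n−j,ℓ−j}^{k−n+2j} D^{ℓ−j}g for j ≤ ℓ ≤ n. -/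
theorem bracket_eq_Ln_mulVec (n j : ℕ) (hj : j ≤ n) (k : ℤ) (Γ : Subgroup SL2R)
    (ρ : Matrix (Fin 2) (Fin 2) ℂ → Matrix (Fin (n + 1)) (Fin (n + 1)) ℂ)
    (hρ : ∀ (g : Matrix (Fin 2) (Fin 2) ℂ) (z₁ z₂ : ℂ),
      ρ g *ᵥ symVec n z₁ z₂ =
        symVec n (g 0 0 * z₁ + g 0 1 * z₂) (g 1 0 * z₁ + g 1 1 * z₂))
    (g : ℂ → ℂ) (hg : IsMF Γ (k - n + 2 * j) g) :
    ∀ z : ℂ, 0 < z.im →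
      (fun i => ∑ r ∈ Finset.range (n - j + 1),
          acoef n (k - n + 2 * j) (n - j) r * iteratedDeriv r g z *
            iteratedDeriv (n - j - r) (vhat n) z i) =
        ρ !![1, z; 0, 1] *ᵥ (fun ℓ : Fin (n + 1) =>
          if (ℓ : ℕ) < j then 0
          else ((n - (ℓ : ℕ)).factorial : ℂ) * acoef n (k - n + 2 * j) (n - j) ((ℓ : ℕ) - j) *
            iteratedDeriv ((ℓ : ℕ) - j) g z) :=
  bracket_eq_Ln_mulVec_general n j hj k ρ hρ g
end
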